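/- arXiv:2604.19313 — 2 statements merged into one kernel-verified Lean document; each statement's English description precedes it below -/
import Mathlib

section
/- The compact elements of the frame of radical ideals of a commutative ring R are exactly the radicals of finitely generated ideals. -/
/-!
The radical `Ideal R → RadId R` is left adjoint to the inclusion, and the inclusion preserves
directed suprema because a directed union of radical ideals is radical. A left adjoint whose right
adjoint preserves directed suprema sends compact elements to compact elements, so radicals of
finitely generated ideals (the compact ideals) are compact. Conversely, ideals form a compactly
generated lattice, so a compact radical ideal `I` is covered by the radicals of the compact ideals
below it, hence by the radical of a single one of them, which is then equal to `I`.
-/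

/-- The frame of radical ideals of `R`. -/
abbrev RadId (R : Type*) [CommRing R] := {I : Ideal R // I.IsRadical}

/-- The Galois insertion of the radical into radical ideals. -/
noncomputable def radicalGI (R : Type*) [CommRing R] :
    GaloisInsertion (fun I : Ideal R => (⟨I.radical, I.radical_isRadical⟩ : RadId R))
      (fun J : RadId R => (J : Ideal R)) where
  choice I _ := ⟨I.radical, I.radical_isRadical⟩
  gc I J := J.2.radical_le_iff
  le_l_u J := Ideal.le_radical
  choice_eq _ _ := rfl

noncomputable instance (R : Type*) [CommRing R] : CompleteLattice (RadId R) :=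
  (radicalGI R).liftCompleteLattice

/-- An element `k` of a complete lattice is compact if any set with `sSup` above `k` has a
finite subset with `sup` above `k` (the definition of the older Mathlib). -/
def CompleteLattice.IsCompactElement {α : Type*} [CompleteLattice α] (k : α) :=
  ∀ s : Set α, k ≤ sSup s → ∃ t : Finset α, ↑t ⊆ s ∧ k ≤ t.sup id

section GaloisConnection

variable {α β : Type*} [CompleteLattice α] [CompleteLattice β] {l : α → β} {u : β → α}

theorem GaloisConnection.isCompactElement_l (gc : GaloisConnection l u)
    (hu : ∀ D : Set β, D.Nonempty → DirectedOn (· ≤ ·) D → u (sSup D) ≤ sSup (u '' D))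
    {c : α} (hc : IsCompactElement c) : IsCompactElement (l c) := by
  rw [CompleteLattice.isCompactElement_iff_le_of_directed_sSup_le] at hc ⊢
  intro D hne hdir hle
  obtain ⟨_, ⟨d, hd, rfl⟩, hcd⟩ := hc (u '' D) (hne.image u) (hdir.mono_comp gc.monotone_u)
    ((gc.le_iff_le.mp hle).trans (hu D hne hdir))
  exact ⟨d, hd, gc.l_le hcd⟩

theorem GaloisInsertion.exists_isCompactElement_l_eq [IsCompactlyGenerated α]
    (gi : GaloisInsertion l u) {k : β} (hk : IsCompactElement k) :
    ∃ c, IsCompactElement c ∧ l c = k := by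
  classical
  let C := {c : α | IsCompactElement c ∧ c ≤ u k}
  have hcover : k ≤ ⨆ c : C, l c := le_of_eq <|
    calc k = l (u k) := (gi.l_u_eq k).symm
      _ = l (sSup C) := by rw [sSup_compact_le_eq]
      _ = ⨆ c : C, l c := by rw [gi.gc.l_sSup, iSup_subtype']
  obtain ⟨s, hs⟩ := CompleteLattice.IsCompactElement.exists_finset_of_le_iSup β hk _ hcover
  refine ⟨s.sup Subtype.val, CompleteLattice.isCompactElement_finsetSup s fun c _ => c.2.1,
    le_antisymm ?_ ?_⟩
  · exact gi.gc.l_le (Finset.sup_le fun c _ => c.2.2)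
  · exact hs.trans (iSup₂_le fun c hc => gi.gc.monotone_l (Finset.le_sup (f := Subtype.val) hc))

end GaloisConnection

namespace RadId

variable {R : Type*} [CommRing R]

theorem coe_sSup (S : Set (RadId R)) :
    ((sSup S : RadId R) : Ideal R) = (sSup ((↑) '' S : Set (Ideal R))).radical :=
  rfl

theorem coe_sSup_of_directedOn {D : Set (RadId R)} (hne : D.Nonempty)
    (hdir : DirectedOn (· ≤ ·) D) :
    ((sSup D : RadId R) : Ideal R) = sSup ((↑) '' D : Set (Ideal R)) := by
  rw [coe_sSup]
  refine Ideal.IsRadical.radical fun x ⟨n, hxn⟩ => ?_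
  obtain ⟨_, ⟨J, hJ, rfl⟩, hxnJ⟩ := (Submodule.mem_sSup_of_directed (hne.image _)
    (hdir.mono_comp fun _ _ h => h)).mp hxn
  exact le_sSup (Set.mem_image_of_mem Subtype.val hJ) (J.2 ⟨n, hxnJ⟩)

end RadId

theorem compact_iff_radical_fg (R : Type*) [CommRing R] (I : RadId R) :
    CompleteLattice.IsCompactElement I ↔
      ∃ s : Finset R, (I : Ideal R) = (Ideal.span (s : Set R)).radical := by
  rw [CompleteLattice.IsCompactElement,
    ← CompleteLattice.isCompactElement_iff_exists_le_sSup_of_le_sSup]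
  constructor
  · intro hI
    obtain ⟨J, hJ, rfl⟩ := (radicalGI R).exists_isCompactElement_l_eq hI
    obtain ⟨s, rfl⟩ := (Submodule.fg_iff_compact J).mpr hJ
    exact ⟨s, rfl⟩
  · rintro ⟨s, hs⟩
    obtain rfl : I = ⟨(Ideal.span (s : Set R)).radical, Ideal.radical_isRadical _⟩ :=
      Subtype.ext hs
    exact (radicalGI R).gc.isCompactElement_l
      (fun _ hne hdir => (RadId.coe_sSup_of_directedOn hne hdir).le)
      (Submodule.finset_span_isCompactElement s)
end

section
/- Let φ : R → S be a ring homomorphism between commutative rings. The map sending a radical ideal I of R to the radical of the ideal of S generated by φ(I) is a frame homomorphism from the frame of radical ideals of R to the frame of radical ideals of S: it preserves the top element, arbitrary joins, and finite meets. -/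
namespace Ideal

variable {R S : Type*} [CommSemiring R] [CommSemiring S]

theorem radical_iSup_radical {ι : Sort*} (I : ι → Ideal R) :
    (⨆ i, (I i).radical).radical = (⨆ i, I i).radical :=
  le_antisymm
    (radical_le_radical_iff.mpr <| iSup_le fun i => radical_mono (le_iSup I i))
    (radical_mono <| iSup_mono fun _ => le_radical)

variable (φ : R →+* S)

theorem radical_map_radical (I : Ideal R) : (I.radical.map φ).radical = (I.map φ).radical :=
  le_antisymm (radical_le_radical_iff.mpr (map_radical_le φ)) (radical_mono (map_mono le_radical))

theorem radical_map_inf (I J : Ideal R) :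
    ((I ⊓ J).map φ).radical = (I.map φ).radical ⊓ (J.map φ).radical := by
  refine le_antisymm ?_ ?_
  · rw [← radical_inf]
    exact radical_mono (map_inf_le φ)
  · rw [← radical_mul, ← Ideal.map_mul]
    exact radical_mono (map_mono mul_le_inf)

end Ideal

theorem extension_frame_hom (R S : Type*) [CommRing R] [CommRing S] (φ : R →+* S) :
    ((Ideal.map φ (⊤ : Ideal R)).radical = ⊤) ∧
    (∀ (ι : Type*) (I : ι → Ideal R), (∀ i, (I i).IsRadical) →
      (Ideal.map φ ((⨆ i, I i).radical)).radical
        = (⨆ i, (Ideal.map φ (I i)).radical).radical) ∧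
    (∀ I J : Ideal R, I.IsRadical → J.IsRadical →
      (Ideal.map φ (I ⊓ J)).radical
        = (Ideal.map φ I).radical ⊓ (Ideal.map φ J).radical) := by
  refine ⟨by rw [Ideal.map_top, Ideal.radical_top], fun ι I _ => ?_,
    fun I J _ _ => Ideal.radical_map_inf φ I J⟩
  rw [Ideal.radical_map_radical, Ideal.map_iSup, Ideal.radical_iSup_radical]
end
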